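/- Let 𝒯 be the smallest set of nonempty lists of integers containing [4] and, for every m ≥ 0, the list [3, 2, …, 2, 3] with m twos in the middle, and closed under the two operations [b_1, …, b_r] ↦ [2, b_1, …, b_{r−1}, b_r + 1] and [b_1, …, b_r] ↦ [b_1 + 1, b_2, …, b_r, 2]. Then for all integers d ≥ 1 and n > a ≥ 1 with gcd(n, a) = 1, there exists a list L ∈ 𝒯 with hj(L) = d·n²/(d·n·a−1). (This is the numerical content of Proposition 2.2(3): every singularity of class T that is not a rational double point is obtained from the basic strings by iterating the two operations.) -/

import Mathlib

/-- Hirzebruch–Jung continued fraction value of a list of integers, computed in ℚ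
with its total inverse: `hj [b] = b` and `hj (b :: l) = b - (hj l)⁻¹`. -/
def hj : List ℤ → ℚ
  | [] => 0
  | b :: l => (b : ℚ) - (hj l)⁻¹

/-- Add 1 to the last entry of a list of integers. -/
def addLast : List ℤ → List ℤ
  | [] => []
  | [b] => [b + 1]
  | b :: l => b :: addLast l

/-- Add 1 to the first entry of a list of integers. -/
def addHead : List ℤ → List ℤ
  | [] => []
  | b :: l => (b + 1) :: l

/-- The smallest set 𝒯 of lists of integers containing `[4]` and the lists
`[3, 2, …, 2, 3]` (with `m ≥ 0` twos in the middle), and closed under the operations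
`[b₁, …, b_r] ↦ [2, b₁, …, b_{r−1}, b_r + 1]` and `[b₁, …, b_r] ↦ [b₁ + 1, b₂, …, b_r, 2]`. -/
inductive ClassT : List ℤ → Prop
  | base : ClassT [4]
  | basePair (m : ℕ) : ClassT (3 :: (List.replicate m 2 ++ [3]))
  | left {L : List ℤ} : ClassT L → ClassT (2 :: addLast L)
  | right {L : List ℤ} : ClassT L → ClassT (addHead L ++ [2])

/-!
For `M(L) = continuant L`, the product of the matrices `!![b, -1; 1, 0]` over the entries of `L`,
`hj L` is the ratio of the two entries of the first column as soon as all entries are `≥ 2`.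
The two operations of class T multiply `M(L)` on both sides by fixed matrices, and
`T(d, n, a) = tMatrix d n a` satisfies
`T(d, n, a) = !![1, 1; 0, 1] * T(d, n - a, a) * M([2])` and
`T(d, n, a) = M([2]) * T(d, a, 2a - n) * !![1, 0; -1, 1]`.
So `(n, a)` is reached from `(n - a, a)` if `2a < n` and from `(a, 2a - n)` if `2a > n`; this
Euclid-like descent ends at `(2, 1)`, where `T(d, 2, 1)` is `M([4])` for `d = 1` and
`M([3, 2, …, 2, 3])` with `d - 2` twos for `d ≥ 2`.
-/

def hjMatrix (b : ℤ) : Matrix (Fin 2) (Fin 2) ℤ := !![b, -1; 1, 0]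

def continuant (L : List ℤ) : Matrix (Fin 2) (Fin 2) ℤ := (L.map hjMatrix).prod

@[simp]
lemma continuant_nil : continuant [] = 1 := rfl

lemma continuant_cons (b : ℤ) (L : List ℤ) :
    continuant (b :: L) = hjMatrix b * continuant L := List.prod_cons

lemma continuant_append (L L' : List ℤ) :
    continuant (L ++ L') = continuant L * continuant L' := by
  simp [continuant]

@[simp]
lemma continuant_cons_zero_zero (b : ℤ) (L : List ℤ) :
    continuant (b :: L) 0 0 = b * continuant L 0 0 - continuant L 1 0 := by
  simp [continuant_cons, hjMatrix, Matrix.mul_apply, sub_eq_add_neg]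

@[simp]
lemma continuant_cons_one_zero (b : ℤ) (L : List ℤ) :
    continuant (b :: L) 1 0 = continuant L 0 0 := by
  simp [continuant_cons, hjMatrix, Matrix.mul_apply]

lemma continuant_replicate_two (m : ℕ) :
    continuant (List.replicate m 2) = !![(m : ℤ) + 1, -m; m, 1 - m] := by
  rw [continuant, List.map_replicate, List.prod_replicate]
  induction m with
  | zero => simp [Matrix.one_fin_two]
  | succ m ih =>
    rw [pow_succ, ih, hjMatrix, Matrix.mul_fin_two]
    ext i j; fin_cases i <;> fin_cases j <;> dsimp <;> ring

lemma continuant_addLast {L : List ℤ} (hL : L ≠ []) :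
    continuant (addLast L) = continuant L * !![1, 0; -1, 1] := by
  induction L using addLast.induct with
  | case1 => contradiction
  | case2 b =>
    simp only [addLast, continuant_cons, continuant_nil, Matrix.mul_one, hjMatrix,
      Matrix.mul_fin_two]
    ext i j; fin_cases i <;> fin_cases j <;> dsimp <;> ring
  | case3 b l hl ih =>
    rw [addLast.eq_3 b l hl, continuant_cons, ih hl, continuant_cons, Matrix.mul_assoc]

lemma continuant_addHead {L : List ℤ} (hL : L ≠ []) :
    continuant (addHead L) = !![1, 1; 0, 1] * continuant L := by
  obtain ⟨b, l, rfl⟩ := List.exists_cons_of_ne_nil hL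
  rw [addHead, continuant_cons, continuant_cons, ← Matrix.mul_assoc]
  congr 1
  simp only [hjMatrix, Matrix.mul_fin_two]
  ext i j; fin_cases i <;> fin_cases j <;> dsimp <;> ring

lemma forall_mem_addLast {p : ℤ → Prop} (hp : ∀ b, p b → p (b + 1)) {L : List ℤ}
    (hL : ∀ b ∈ L, p b) : ∀ b ∈ addLast L, p b := by
  induction L using addLast.induct with
  | case1 => simp [addLast]
  | case2 b => simpa [addLast] using hp b (hL b (by simp))
  | case3 b l hl ih =>
    rw [addLast.eq_3 b l hl]
    simp only [List.forall_mem_cons] at hL ⊢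
    exact ⟨hL.1, ih hL.2⟩

lemma forall_mem_addHead {p : ℤ → Prop} (hp : ∀ b, p b → p (b + 1)) {L : List ℤ}
    (hL : ∀ b ∈ L, p b) : ∀ b ∈ addHead L, p b := by
  cases L with
  | nil => simp [addHead]
  | cons b l =>
    simp only [addHead, List.forall_mem_cons] at hL ⊢
    exact ⟨hp b hL.1, hL.2⟩

lemma continuant_one_zero_lt_zero_zero {L : List ℤ} (hL : ∀ b ∈ L, 2 ≤ b) :
    0 ≤ continuant L 1 0 ∧ continuant L 1 0 < continuant L 0 0 := by
  induction L with
  | nil => simp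
  | cons b l ih =>
    simp only [List.forall_mem_cons] at hL
    obtain ⟨h0, h1⟩ := ih hL.2
    simp only [continuant_cons_zero_zero, continuant_cons_one_zero]
    constructor <;> nlinarith

lemma hj_eq_continuant_div {L : List ℤ} (hL : ∀ b ∈ L, 2 ≤ b) :
    hj L = (continuant L 0 0 : ℚ) / continuant L 1 0 := by
  induction L with
  | nil => simp [hj]
  | cons b l ih =>
    simp only [List.forall_mem_cons] at hL
    have hpos : (continuant l 0 0 : ℚ) ≠ 0 := by
      obtain ⟨h0, h1⟩ := continuant_one_zero_lt_zero_zero hL.2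
      exact_mod_cast (by omega : continuant l 0 0 ≠ 0)
    rw [hj, ih hL.2, inv_div, continuant_cons_zero_zero, continuant_cons_one_zero]
    field_simp
    push_cast
    ring

lemma ClassT.ne_nil {L : List ℤ} (h : ClassT L) : L ≠ [] := by
  cases h <;> simp

lemma ClassT.two_le {L : List ℤ} (h : ClassT L) : ∀ b ∈ L, 2 ≤ b := by
  have hp : ∀ b : ℤ, 2 ≤ b → 2 ≤ b + 1 := by omega
  induction h with
  | base => simp
  | basePair m => grind
  | left _ ih => simpa using forall_mem_addLast hp ih
  | right _ ih => simpa [or_imp, forall_and] using forall_mem_addHead hp ih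

lemma ClassT.continuant_left {L : List ℤ} (h : ClassT L) :
    continuant (2 :: addLast L) = hjMatrix 2 * (continuant L * !![1, 0; -1, 1]) := by
  rw [continuant_cons, continuant_addLast h.ne_nil]

lemma ClassT.continuant_right {L : List ℤ} (h : ClassT L) :
    continuant (addHead L ++ [2]) = !![1, 1; 0, 1] * continuant L * hjMatrix 2 := by
  rw [continuant_append, continuant_addHead h.ne_nil, continuant_cons, continuant_nil,
    Matrix.mul_one]

def tMatrix (d n a : ℤ) : Matrix (Fin 2) (Fin 2) ℤ :=
  !![d * n ^ 2, 1 - d * n * (n - a); d * n * a - 1, 1 - d * a * (n - a)]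

lemma tMatrix_eq_left (d n a : ℤ) :
    tMatrix d n a = hjMatrix 2 * (tMatrix d a (2 * a - n) * !![1, 0; -1, 1]) := by
  simp only [tMatrix, hjMatrix, Matrix.mul_fin_two]
  ext i j; fin_cases i <;> fin_cases j <;> dsimp <;> ring

lemma tMatrix_eq_right (d n a : ℤ) :
    tMatrix d n a = !![1, 1; 0, 1] * tMatrix d (n - a) a * hjMatrix 2 := by
  simp only [tMatrix, hjMatrix, Matrix.mul_fin_two]
  ext i j; fin_cases i <;> fin_cases j <;> dsimp <;> ring

lemma exists_classT_continuant_eq_tMatrix_two_one {d : ℤ} (hd : 1 ≤ d) :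
    ∃ L, ClassT L ∧ continuant L = tMatrix d 2 1 := by
  obtain rfl | hd := hd.eq_or_lt
  · refine ⟨[4], .base, ?_⟩
    simp only [continuant_cons, continuant_nil, Matrix.mul_one, hjMatrix, tMatrix]
    ext i j; fin_cases i <;> fin_cases j <;> rfl
  · obtain ⟨m, rfl⟩ : ∃ m : ℕ, d = m + 2 := ⟨(d - 2).toNat, by omega⟩
    refine ⟨_, .basePair m, ?_⟩
    simp only [continuant_cons, continuant_append, continuant_replicate_two, continuant_nil,
      Matrix.mul_one, hjMatrix, tMatrix, Matrix.mul_fin_two]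
    ext i j; fin_cases i <;> fin_cases j <;> dsimp <;> ring

lemma exists_classT_continuant_eq_tMatrix {d n a : ℤ} (hd : 1 ≤ d) (ha : 1 ≤ a)
    (hna : a < n) (hcop : IsCoprime n a) :
    ∃ L, ClassT L ∧ continuant L = tMatrix d n a := by
  rcases lt_trichotomy (2 * a) n with hlt | heq | hgt
  · obtain ⟨L, hL, hLT⟩ := exists_classT_continuant_eq_tMatrix hd ha (by omega : a < n - a)
      (by simpa using (IsCoprime.sub_mul_right_left_iff (z := 1)).mpr hcop)
    exact ⟨_, hL.right, by rw [hL.continuant_right, hLT, ← tMatrix_eq_right]⟩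
  · obtain rfl : a = 1 := by
      have := hcop.isUnit_of_dvd' (heq ▸ dvd_mul_left a 2) dvd_rfl
      rcases Int.isUnit_iff.mp this with h | h <;> omega
    obtain rfl : n = 2 := by omega
    exact exists_classT_continuant_eq_tMatrix_two_one hd
  · obtain ⟨L, hL, hLT⟩ := exists_classT_continuant_eq_tMatrix hd (by omega : 1 ≤ 2 * a - n)
      (by omega) (IsCoprime.mul_sub_right_right_iff.mpr hcop.symm)
    exact ⟨_, hL.left, by rw [hL.continuant_left, hLT, ← tMatrix_eq_left]⟩
termination_by n.toNat
decreasing_by all_goals omega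

/-- Proposition 2.2(3), numerically: for all integers `d ≥ 1` and `n > a ≥ 1` with
`gcd(n, a) = 1`, some list in 𝒯 has Hirzebruch–Jung value `d·n²/(d·n·a−1)`. -/
theorem classT_complete (d n a : ℤ) (hd : 1 ≤ d) (hna : a < n) (ha : 1 ≤ a)
    (hcop : Int.gcd n a = 1) :
    ∃ L : List ℤ, ClassT L ∧ hj L = (d * n ^ 2 : ℚ) / (d * n * a - 1) := by
  obtain ⟨L, hL, hLT⟩ := exists_classT_continuant_eq_tMatrix hd ha hna
    (Int.isCoprime_iff_gcd_eq_one.mpr hcop)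
  refine ⟨L, hL, ?_⟩
  rw [hj_eq_continuant_div hL.two_le, hLT]
  simp [tMatrix]
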